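/- arXiv:1504.03931 — 2 statements merged into one kernel-verified Lean document; each statement's English description precedes it below -/
import Mathlib

section
/- Let (Ω, F, μ) be a probability space, m ⊆ F a sub-σ-algebra, and r ∈ (0,1). For all bounded measurable functions f, g : Ω → ℝ with f ≥ 0 and g ≥ 0, and every λ ∈ [0,1], the conditional expectations satisfy, μ-almost everywhere: (μ[(λ·f + (1−λ)·g)^r | m])^{1/r} ≥ λ·(μ[f^r | m])^{1/r} + (1−λ)·(μ[g^r | m])^{1/r}. -/
/-!
The map `X ↦ (μ[X ^ r | m]) ^ (1 / r)` is positively homogeneous, so its concavity reduces to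
superadditivity. Put `a = (μ[X ^ r | m]) ^ (1 / r)` and `b = (μ[Y ^ r | m]) ^ (1 / r)`.
Hölder's inequality for two terms gives, pointwise,
`X ^ r a ^ (1 - r) + Y ^ r b ^ (1 - r) ≤ (X + Y) ^ r (a + b) ^ (1 - r)`.
The weights are `m`-measurable, so taking conditional expectations turns the left side into
`a + b` and the right side into `(a + b) ^ (1 - r) μ[(X + Y) ^ r | m]`; dividing by
`(a + b) ^ (1 - r)` gives `(a + b) ^ r ≤ μ[(X + Y) ^ r | m]`.
-/

open MeasureTheory

namespace Real

theorem rpow_mul_rpow_add_le {r : ℝ} (hr0 : 0 < r) (hr1 : r < 1) {s t u v : ℝ}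
    (hs : 0 ≤ s) (ht : 0 ≤ t) (hu : 0 ≤ u) (hv : 0 ≤ v) :
    s ^ r * u ^ (1 - r) + t ^ r * v ^ (1 - r) ≤ (s + t) ^ r * (u + v) ^ (1 - r) := by
  have h1r : 0 < 1 - r := by linarith
  have := inner_le_Lp_mul_Lq_of_nonneg Finset.univ (HolderConjugate.inv_one_sub_inv hr0 hr1)
    (f := ![s ^ r, t ^ r]) (g := ![u ^ (1 - r), v ^ (1 - r)])
    (by simp [Fin.forall_fin_two, rpow_nonneg, hs, ht])
    (by simp [Fin.forall_fin_two, rpow_nonneg, hu, hv])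
  simpa [Fin.sum_univ_two, rpow_rpow_inv, hs, ht, hu, hv, hr0.ne', h1r.ne'] using this

theorem rpow_one_sub_mul_rpow {x : ℝ} (hx : 0 ≤ x) (r : ℝ) : x ^ (1 - r) * x ^ r = x := by
  rw [← rpow_add' hx (by norm_num), sub_add_cancel, rpow_one]

theorem le_rpow_one_div_of_le_rpow_one_sub_mul {r d c : ℝ} (hr : 0 < r) (hd : 0 ≤ d) (hc : 0 ≤ c)
    (h : d ≤ d ^ (1 - r) * c) : d ≤ c ^ (1 / r) := by
  rcases hd.eq_or_lt with rfl | hd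
  · positivity
  have hdr : d ^ r ≤ c := by
    refine le_of_mul_le_mul_left ?_ (rpow_pos_of_pos hd (1 - r))
    rwa [rpow_one_sub_mul_rpow hd.le]
  calc d = (d ^ r) ^ (1 / r) := by rw [one_div, rpow_rpow_inv hd.le hr.ne']
    _ ≤ c ^ (1 / r) := by gcongr

end Real

/-- The paper's power certainty equivalent of `X` given `m`. -/
noncomputable def condPowerMean {Ω : Type*} {F : MeasurableSpace Ω} (μ : Measure[F] Ω)
    (m : MeasurableSpace Ω) (r : ℝ) (X : Ω → ℝ) : Ω → ℝ :=
  fun ω => (μ[fun ω => X ω ^ r | m] ω) ^ (1 / r)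

section
variable {Ω : Type*} {m F : MeasurableSpace Ω} {μ : Measure[F] Ω} {r : ℝ} {X Y : Ω → ℝ}

lemma ae_norm_rpow_le {Z : Ω → ℝ} {p C : ℝ} (hp : 0 ≤ p) (hZ : 0 ≤ᵐ[μ] Z)
    (hZC : ∀ᵐ ω ∂μ, Z ω ≤ C) : ∀ᵐ ω ∂μ, ‖Z ω ^ p‖ ≤ C ^ p := by
  filter_upwards [hZ, hZC] with ω h0 hC
  rw [Real.norm_of_nonneg (Real.rpow_nonneg h0 p)]
  gcongr

lemma integrable_rpow_of_le [IsFiniteMeasure μ] (hr : 0 ≤ r) (hXm : AEStronglyMeasurable X μ)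
    (hX : 0 ≤ᵐ[μ] X) {C : ℝ} (hXC : ∀ᵐ ω ∂μ, X ω ≤ C) :
    Integrable (fun ω => X ω ^ r) μ :=
  .of_bound ((Real.continuous_rpow_const hr).comp_aestronglyMeasurable hXm) _
    (ae_norm_rpow_le hr hX hXC)

lemma condExp_rpow_nonneg (hX : 0 ≤ᵐ[μ] X) : 0 ≤ᵐ[μ] μ[fun ω => X ω ^ r | m] :=
  condExp_nonneg (by filter_upwards [hX] with ω h using Real.rpow_nonneg h r)

lemma condPowerMean_nonneg (hX : 0 ≤ᵐ[μ] X) : 0 ≤ᵐ[μ] condPowerMean μ m r X := by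
  filter_upwards [condExp_rpow_nonneg (m := m) (r := r) hX] with ω h using Real.rpow_nonneg h _

lemma stronglyMeasurable_condPowerMean : StronglyMeasurable[m] (condPowerMean μ m r X) :=
  (stronglyMeasurable_condExp.measurable.pow_const _).stronglyMeasurable

lemma condPowerMean_const_mul (hr : r ≠ 0) {c : ℝ} (hc : 0 ≤ c) (hX : 0 ≤ᵐ[μ] X) :
    condPowerMean μ m r (fun ω => c * X ω) =ᵐ[μ] fun ω => c * condPowerMean μ m r X ω := by
  have hpow : μ[fun ω => (c * X ω) ^ r | m] =ᵐ[μ] c ^ r • μ[fun ω => X ω ^ r | m] := by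
    refine (condExp_congr_ae ?_).trans (condExp_smul _ _ m)
    filter_upwards [hX] with ω h using Real.mul_rpow hc h
  filter_upwards [hpow, condExp_rpow_nonneg (m := m) (r := r) hX] with ω hω h0
  simp only [condPowerMean, hω, Pi.smul_apply, smul_eq_mul]
  rw [Real.mul_rpow (Real.rpow_nonneg hc r) h0, one_div, Real.rpow_rpow_inv hc hr]

lemma condPowerMean_le (hm : m ≤ F) [IsFiniteMeasure μ] (hr : 0 < r)
    (hXm : AEStronglyMeasurable X μ) (hX : 0 ≤ᵐ[μ] X) {C : ℝ} (hXC : ∀ᵐ ω ∂μ, X ω ≤ C) :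
    ∀ᵐ ω ∂μ, condPowerMean μ m r X ω ≤ C := by
  have hmono : μ[fun ω => X ω ^ r | m] ≤ᵐ[μ] μ[fun _ => C ^ r | m] := by
    refine condExp_mono (integrable_rpow_of_le hr.le hXm hX hXC) (integrable_const _) ?_
    filter_upwards [hX, hXC] with ω h0 hC
    gcongr
  rw [condExp_const hm] at hmono
  filter_upwards [hmono, condExp_rpow_nonneg (m := m) (r := r) hX, hX, hXC] with ω hω h0 hX0 hC
  calc condPowerMean μ m r X ω ≤ (C ^ r) ^ (1 / r) := by unfold condPowerMean; gcongr
    _ = C := by rw [one_div, Real.rpow_rpow_inv (hX0.trans hC) hr.ne']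

lemma integrable_rpow_mul_of_le (hm : m ≤ F) {Z W : Ω → ℝ} {p C : ℝ} (hp : 0 ≤ p)
    (hZm : StronglyMeasurable[m] Z) (hZ : 0 ≤ᵐ[μ] Z) (hZC : ∀ᵐ ω ∂μ, Z ω ≤ C)
    (hW : Integrable W μ) : Integrable (fun ω => Z ω ^ p * W ω) μ :=
  hW.bdd_mul ((hZm.measurable.pow_const p).stronglyMeasurable.mono hm).aestronglyMeasurable
    (ae_norm_rpow_le hp hZ hZC)

lemma condExp_rpow_mul_of_le (hm : m ≤ F) [IsFiniteMeasure μ] {Z W : Ω → ℝ} {p C : ℝ}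
    (hp : 0 ≤ p) (hZm : StronglyMeasurable[m] Z) (hZ : 0 ≤ᵐ[μ] Z) (hZC : ∀ᵐ ω ∂μ, Z ω ≤ C)
    (hW : Integrable W μ) :
    μ[fun ω => Z ω ^ p * W ω | m] =ᵐ[μ] fun ω => Z ω ^ p * μ[W | m] ω :=
  condExp_stronglyMeasurable_mul_of_bound hm (hZm.measurable.pow_const p).stronglyMeasurable hW _
    (ae_norm_rpow_le hp hZ hZC)

lemma condExp_condPowerMean_rpow_one_sub_mul (hm : m ≤ F) [IsFiniteMeasure μ] (hr0 : 0 < r)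
    (hr1 : r ≤ 1) (hXm : AEStronglyMeasurable X μ) (hX : 0 ≤ᵐ[μ] X) {C : ℝ}
    (hXC : ∀ᵐ ω ∂μ, X ω ≤ C) :
    μ[fun ω => condPowerMean μ m r X ω ^ (1 - r) * X ω ^ r | m] =ᵐ[μ] condPowerMean μ m r X := by
  filter_upwards [condExp_rpow_mul_of_le hm (sub_nonneg.2 hr1) stronglyMeasurable_condPowerMean
      (condPowerMean_nonneg hX) (condPowerMean_le hm hr0 hXm hX hXC)
      (integrable_rpow_of_le hr0.le hXm hX hXC),
    condExp_rpow_nonneg (m := m) (r := r) hX] with ω hω h0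
  have hA : μ[fun ω => X ω ^ r | m] ω = (condPowerMean μ m r X ω) ^ r :=
    (Real.rpow_inv_rpow h0 hr0.ne').symm.trans (by rw [condPowerMean, one_div])
  rw [hω, hA]
  exact Real.rpow_one_sub_mul_rpow (Real.rpow_nonneg h0 _) r

lemma condPowerMean_add_le (hm : m ≤ F) [IsFiniteMeasure μ] (hr0 : 0 < r) (hr1 : r < 1)
    (hXm : AEStronglyMeasurable X μ) (hX : 0 ≤ᵐ[μ] X) {CX : ℝ} (hXC : ∀ᵐ ω ∂μ, X ω ≤ CX)
    (hYm : AEStronglyMeasurable Y μ) (hY : 0 ≤ᵐ[μ] Y) {CY : ℝ} (hYC : ∀ᵐ ω ∂μ, Y ω ≤ CY) :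
    ∀ᵐ ω ∂μ,
      condPowerMean μ m r X ω + condPowerMean μ m r Y ω ≤ condPowerMean μ m r (X + Y) ω := by
  set a := condPowerMean μ m r X
  set b := condPowerMean μ m r Y
  have ha0 : 0 ≤ᵐ[μ] a := condPowerMean_nonneg hX
  have hb0 : 0 ≤ᵐ[μ] b := condPowerMean_nonneg hY
  have hab0 : 0 ≤ᵐ[μ] a + b := by filter_upwards [ha0, hb0] with ω h1 h2 using add_nonneg h1 h2
  have habC : ∀ᵐ ω ∂μ, a ω + b ω ≤ CX + CY := by
    filter_upwards [condPowerMean_le hm hr0 hXm hX hXC, condPowerMean_le hm hr0 hYm hY hYC]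
      with ω h1 h2 using add_le_add h1 h2
  have hpoint : (fun ω => a ω ^ (1 - r) * X ω ^ r + b ω ^ (1 - r) * Y ω ^ r)
      ≤ᵐ[μ] fun ω => (a + b) ω ^ (1 - r) * (X + Y) ω ^ r := by
    filter_upwards [hX, hY, ha0, hb0] with ω h1 h2 h3 h4
    simpa only [Pi.add_apply, mul_comm] using Real.rpow_mul_rpow_add_le hr0 hr1 h1 h2 h3 h4
  have hXY0 : 0 ≤ᵐ[μ] X + Y := by
    filter_upwards [hX, hY] with ω h1 h2 using add_nonneg h1 h2
  have hXYC : ∀ᵐ ω ∂μ, (X + Y) ω ≤ CX + CY := by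
    filter_upwards [hXC, hYC] with ω h1 h2 using add_le_add h1 h2
  have hXr := integrable_rpow_of_le hr0.le hXm hX hXC
  have hYr := integrable_rpow_of_le hr0.le hYm hY hYC
  have hXYr := integrable_rpow_of_le hr0.le (hXm.add hYm) hXY0 hXYC
  have h1r : 0 ≤ 1 - r := by linarith
  have haX := integrable_rpow_mul_of_le hm h1r stronglyMeasurable_condPowerMean ha0
    (condPowerMean_le hm hr0 hXm hX hXC) hXr
  have hbY := integrable_rpow_mul_of_le hm h1r stronglyMeasurable_condPowerMean hb0
    (condPowerMean_le hm hr0 hYm hY hYC) hYr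
  have habXY := integrable_rpow_mul_of_le hm h1r
    (stronglyMeasurable_condPowerMean.add stronglyMeasurable_condPowerMean) hab0 habC hXYr
  have hleft : μ[fun ω => a ω ^ (1 - r) * X ω ^ r + b ω ^ (1 - r) * Y ω ^ r | m] =ᵐ[μ] a + b :=
    (condExp_add haX hbY m).trans
      ((condExp_condPowerMean_rpow_one_sub_mul hm hr0 hr1.le hXm hX hXC).add
        (condExp_condPowerMean_rpow_one_sub_mul hm hr0 hr1.le hYm hY hYC))
  have hright := condExp_rpow_mul_of_le hm h1r
    (stronglyMeasurable_condPowerMean.add stronglyMeasurable_condPowerMean) hab0 habC hXYr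
  filter_upwards [condExp_mono (m := m) (haX.add hbY) habXY hpoint, hleft, hright, hab0,
    condExp_rpow_nonneg (m := m) (r := r) hXY0] with ω hle hl hr h0 hS0
  exact Real.le_rpow_one_div_of_le_rpow_one_sub_mul hr0 h0 hS0
    (hl.symm.trans_le (hle.trans_eq hr))

end

/-- Conditional concavity of the power certainty equivalent: for bounded nonnegative
measurable `f, g` and `r ∈ (0,1)`, a.e.
`(μ[(λf+(1-λ)g)^r | m])^(1/r) ≥ λ (μ[f^r | m])^(1/r) + (1-λ) (μ[g^r | m])^(1/r)`. -/
theorem condexp_power_certainty_equivalent_concave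
    {Ω : Type*} {m F : MeasurableSpace Ω} (hm : m ≤ F)
    (μ : @Measure Ω F) [IsProbabilityMeasure μ]
    (r : ℝ) (hr0 : 0 < r) (hr1 : r < 1)
    (f g : Ω → ℝ) (hf : Measurable[F] f) (hg : Measurable[F] g)
    (Cf Cg : ℝ) (hfb : ∀ ω, |f ω| ≤ Cf) (hgb : ∀ ω, |g ω| ≤ Cg)
    (hf0 : ∀ ω, 0 ≤ f ω) (hg0 : ∀ ω, 0 ≤ g ω)
    (l : ℝ) (hl0 : 0 ≤ l) (hl1 : l ≤ 1) :
    ∀ᵐ ω ∂μ,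
      l * ((μ[(fun ω => f ω ^ r) | m]) ω) ^ (1 / r)
        + (1 - l) * ((μ[(fun ω => g ω ^ r) | m]) ω) ^ (1 / r)
      ≤ ((μ[(fun ω => (l * f ω + (1 - l) * g ω) ^ r) | m]) ω) ^ (1 / r) := by
  have hl1' : 0 ≤ 1 - l := sub_nonneg.2 hl1
  have hlf := condPowerMean_const_mul (μ := μ) (m := m) hr0.ne' hl0 (ae_of_all _ hf0)
  have hlg := condPowerMean_const_mul (μ := μ) (m := m) hr0.ne' hl1' (ae_of_all _ hg0)
  have hadd := condPowerMean_add_le (μ := μ) hm hr0 hr1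
    (hf.const_mul l).aestronglyMeasurable (ae_of_all _ fun ω => mul_nonneg hl0 (hf0 ω))
    (ae_of_all _ fun ω => mul_le_mul_of_nonneg_left ((le_abs_self _).trans (hfb ω)) hl0)
    (hg.const_mul (1 - l)).aestronglyMeasurable (ae_of_all _ fun ω => mul_nonneg hl1' (hg0 ω))
    (ae_of_all _ fun ω => mul_le_mul_of_nonneg_left ((le_abs_self _).trans (hgb ω)) hl1')
  filter_upwards [hlf, hlg, hadd] with ω hlfω hlgω haddω
  rw [hlfω, hlgω] at haddω
  exact haddω
end

section
/- Let d ∈ ℕ and E = EuclideanSpace ℝ (Fin d). Fix y > 0 and z ∈ E, and set β̄ = −‖z‖²/(2y²) and q̄ = z/y. Then (β̄, q̄) is a subgradient of the function (y', z') ↦ ‖z'‖²/(2y') at (y, z) on the set {y' > 0}: for all y' > 0 and z' ∈ E, ‖z'‖²/(2y') ≥ ‖z‖²/(2y) + β̄·(y' − y) + ⟪q̄, z' − z⟫. -/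
open scoped InnerProductSpace

/-- `(β̄, q̄) = (-‖z‖²/(2y²), z/y)` is a subgradient of `(y', z') ↦ ‖z'‖²/(2y')`
at `(y, z)` on `{y' > 0}`. -/
theorem generator_subgradient
    (d : ℕ) (y : ℝ) (hy : 0 < y) (z : EuclideanSpace ℝ (Fin d)) :
    ∀ y' : ℝ, 0 < y' → ∀ z' : EuclideanSpace ℝ (Fin d),
      ‖z‖ ^ 2 / (2 * y) + (-(‖z‖ ^ 2 / (2 * y ^ 2))) * (y' - y)
          + ⟪y⁻¹ • z, z' - z⟫_ℝ
        ≤ ‖z'‖ ^ 2 / (2 * y') := by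
  intro y' hy' z'
  have h1 : ‖y • z' - y' • z‖ ^ 2
      = y ^ 2 * ‖z'‖ ^ 2 - 2 * (y * y') * ⟪z, z'⟫_ℝ + y' ^ 2 * ‖z‖ ^ 2 := by
    rw [norm_sub_sq_real]
    simp [norm_smul, abs_of_pos hy, abs_of_pos hy', inner_smul_left,
      inner_smul_right, real_inner_comm z z', mul_pow]
    ring
  have h2 : ⟪y⁻¹ • z, z' - z⟫_ℝ = y⁻¹ * (⟪z, z'⟫_ℝ - ‖z‖ ^ 2) := by
    rw [inner_smul_left, inner_sub_right, real_inner_self_eq_norm_sq]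
    simp
  have hk : (0:ℝ) ≤ ‖y • z' - y' • z‖ ^ 2 := sq_nonneg _
  rw [h2, ← sub_nonneg]
  have h3 : ‖z'‖ ^ 2 / (2 * y')
      - (‖z‖ ^ 2 / (2 * y) + (-(‖z‖ ^ 2 / (2 * y ^ 2))) * (y' - y)
        + y⁻¹ * (⟪z, z'⟫_ℝ - ‖z‖ ^ 2))
      = ‖y • z' - y' • z‖ ^ 2 / (2 * y' * y ^ 2) := by
    rw [h1]; field_simp; ring
  rw [h3]; positivity
end
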